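/- (Smoothness step of the Proposition) Let E be a real inner product space that is a complete normed space, W a nonempty finite type, r : W → ℝ with r w > 0 for all w, and p : E → W → ℝ such that for each θ ∈ E, p θ is a probability mass function on W with p θ w > 0 for all w. Define f : E → ℝ by f θ = Real.log (∑_{w} r w * p θ w), and define ELBO_r(θ, q) = ∑_{w} q w * Real.log (r w * p θ w / q w) and q*_θ w = r w * p θ w / (∑_{v} r v * p θ v). Assume f is differentiable on E and its gradient ∇f is Lipschitz with constant L ≥ 0. Let θ*, θ̂ ∈ E satisfy ⟪∇f(θ̂), θ* − θ̂⟫ ≤ 0. Then for every probability mass function q on W with q w > 0 for all w, f(θ*) ≤ ELBO_r(θ̂, q) + ∑_{w} q w * Real.log (q w / q*_{θ̂} w) + (L / 2) * ‖θ* − θ̂‖². -/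

import Mathlib

/-!
The reward-weighted ELBO and the KL divergence to `q*_θ̂` add up to `f θ̂`: termwise,
`q w * log (a w / q w) + q w * log (q w / (a w / S)) = q w * log S` with `S = ∑ v, a v`,
and `q` sums to one. The theorem is then the descent lemma for `f` at `θ̂`, whose
first-order term `⟪∇f θ̂, θ* - θ̂⟫` is nonpositive by assumption. The descent lemma itself
holds because `t ↦ f (x + t • d)` minus its quadratic model has derivative
`⟪∇f (x + t • d) - ∇f x, d⟫ - L t ‖d‖² ≤ 0` for `t ≥ 0`.
-/

open Real Set

section Descent

variable {E : Type*} [NormedAddCommGroup E] [InnerProductSpace ℝ E]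

theorem LipschitzWith.inner_sub_add_smul_le {F : E → E} {L : NNReal} (hF : LipschitzWith L F)
    (x d : E) {t : ℝ} (ht : 0 ≤ t) :
    inner ℝ (F (x + t • d) - F x) d ≤ L * t * ‖d‖ ^ 2 :=
  calc inner ℝ (F (x + t • d) - F x) d
      ≤ ‖F (x + t • d) - F x‖ * ‖d‖ := real_inner_le_norm _ _
    _ ≤ L * ‖x + t • d - x‖ * ‖d‖ := by gcongr; exact hF.norm_sub_le _ _
    _ = L * t * ‖d‖ ^ 2 := by
      rw [add_sub_cancel_left, norm_smul, norm_of_nonneg ht]; ring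

variable [CompleteSpace E]

theorem HasGradientAt.hasDerivAt_comp_add_smul {f : E → ℝ} {g x d : E} {t : ℝ}
    (h : HasGradientAt f g (x + t • d)) :
    HasDerivAt (fun s : ℝ => f (x + s • d)) (inner ℝ g d) t := by
  have hline : HasDerivAt (fun s : ℝ => x + s • d) d t := by
    simpa using ((hasDerivAt_id t).smul_const d).const_add x
  simpa [Function.comp_def] using h.hasFDerivAt.comp_hasDerivAt t hline

theorem descent_lemma {f : E → ℝ} {L : NNReal} (hf : Differentiable ℝ f)
    (hlip : LipschitzWith L (gradient f)) (x y : E) :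
    f y ≤ f x + inner ℝ (gradient f x) (y - x) + L / 2 * ‖y - x‖ ^ 2 := by
  set d := y - x
  set φ : ℝ → ℝ := fun t =>
    f (x + t • d) - t * inner ℝ (gradient f x) d - L / 2 * t ^ 2 * ‖d‖ ^ 2
  have hφ : ∀ t, HasDerivAt φ
      (inner ℝ (gradient f (x + t • d)) d - inner ℝ (gradient f x) d - L * t * ‖d‖ ^ 2) t := by
    intro t
    have := (((hf (x + t • d)).hasGradientAt.hasDerivAt_comp_add_smul).sub
      ((hasDerivAt_id t).mul_const (inner ℝ (gradient f x) d))).sub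
      ((((hasDerivAt_id t).pow 2).const_mul (L / 2 : ℝ)).mul_const (‖d‖ ^ 2))
    exact this.congr_deriv (by simp only [id, Nat.add_one_sub_one, pow_one]; ring)
  have hanti : AntitoneOn φ (Ici 0) := by
    refine antitoneOn_of_hasDerivWithinAt_nonpos (convex_Ici 0)
      (fun t _ => (hφ t).continuousAt.continuousWithinAt) (fun t _ => (hφ t).hasDerivWithinAt) ?_
    intro t ht
    rw [interior_Ici] at ht
    have := hlip.inner_sub_add_smul_le x d ht.le
    rw [inner_sub_left] at this
    linarith
  have h01 : φ 1 ≤ φ 0 := hanti self_mem_Ici (mem_Ici.2 zero_le_one) zero_le_one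
  simp only [φ, zero_smul, add_zero, one_smul, zero_mul, sub_zero, one_mul, one_pow, ne_eq,
    OfNat.ofNat_ne_zero, not_false_eq_true, zero_pow, mul_zero, d, add_sub_cancel] at h01
  linarith

end Descent

theorem mul_log_div_add_mul_log_div_div (q : ℝ) {a S : ℝ} (ha : a ≠ 0) (hS : S ≠ 0) :
    q * log (a / q) + q * log (q / (a / S)) = q * log S := by
  rcases eq_or_ne q 0 with rfl | hq
  · simp
  rw [← mul_add, ← log_mul (div_ne_zero ha hq) (div_ne_zero hq (div_ne_zero ha hS))]
  field_simp

theorem sum_mul_log_div_add_sum_mul_log_div_div_sum {W : Type*} [Fintype W] {a q : W → ℝ}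
    (ha : ∀ w, 0 < a w) (hq : ∑ w, q w = 1) :
    ∑ w, q w * log (a w / q w) + ∑ w, q w * log (q w / (a w / ∑ v, a v)) = log (∑ v, a v) := by
  have hS : ∀ w, ∑ v, a v ≠ 0 := fun w =>
    ((ha w).trans_le (Finset.single_le_sum (fun v _ => (ha v).le) (Finset.mem_univ w))).ne'
  rw [← Finset.sum_add_distrib, Finset.sum_congr rfl fun w _ =>
    mul_log_div_add_mul_log_div_div (q w) (ha w).ne' (hS w), ← Finset.sum_mul, hq, one_mul]

theorem smoothness_step_general {E : Type*} [NormedAddCommGroup E]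
    [InnerProductSpace ℝ E] [CompleteSpace E]
    {W : Type*} [Fintype W]
    (r : W → ℝ) (hr : ∀ w, 0 < r w)
    (p : E → W → ℝ) (hp : ∀ θ w, 0 < p θ w)
    (f : E → ℝ) (hf : f = fun θ => Real.log (∑ w, r w * p θ w))
    (L : NNReal) (hdiff : Differentiable ℝ f)
    (hlip : LipschitzWith L (gradient f))
    (θs θh : E)
    (hinner : @inner ℝ _ _ (gradient f θh) (θs - θh) ≤ 0)
    (q : W → ℝ) (hqsum : ∑ w, q w = 1) :
    f θs ≤ (∑ w, q w * Real.log (r w * p θh w / q w)) +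
        (∑ w, q w * Real.log (q w / (r w * p θh w / ∑ v, r v * p θh v))) +
        (L : ℝ) / 2 * ‖θs - θh‖ ^ 2 := by
  have hgap : (∑ w, q w * log (r w * p θh w / q w)) +
      (∑ w, q w * log (q w / (r w * p θh w / ∑ v, r v * p θh v))) = f θh := by
    rw [hf]
    exact sum_mul_log_div_add_sum_mul_log_div_div_sum (fun w => mul_pos (hr w) (hp θh w)) hqsum
  have hdescent := descent_lemma hdiff hlip θh θs
  linarith

/-- Smoothness step: combining the descent lemma for an L-Lipschitz gradient
with the gap identity, a first-order stationarity-type inequality at θ̂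
bounds the log expected reward at θ* by the reward-weighted ELBO at θ̂ plus
the KL divergence plus a quadratic term. -/
theorem smoothness_step {E : Type*} [NormedAddCommGroup E]
    [InnerProductSpace ℝ E] [CompleteSpace E]
    {W : Type*} [Fintype W] [Nonempty W]
    (r : W → ℝ) (hr : ∀ w, 0 < r w)
    (p : E → W → ℝ) (hp : ∀ θ w, 0 < p θ w) (hpsum : ∀ θ, ∑ w, p θ w = 1)
    (f : E → ℝ) (hf : f = fun θ => Real.log (∑ w, r w * p θ w))
    (L : NNReal) (hdiff : Differentiable ℝ f)
    (hlip : LipschitzWith L (gradient f))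
    (θs θh : E)
    (hinner : @inner ℝ _ _ (gradient f θh) (θs - θh) ≤ 0)
    (q : W → ℝ) (hq : ∀ w, 0 < q w) (hqsum : ∑ w, q w = 1) :
    f θs ≤ (∑ w, q w * Real.log (r w * p θh w / q w)) +
        (∑ w, q w * Real.log (q w / (r w * p θh w / ∑ v, r v * p θh v))) +
        (L : ℝ) / 2 * ‖θs - θh‖ ^ 2 :=
  smoothness_step_general r hr p hp f hf L hdiff hlip θs θh hinner q hqsum
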